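/- Let r ≥ 0, let X and Y be finite quasimetric spaces, let M be an r-minimal model of X and N an r-minimal model of Y. Then X and Y are r-homotopy equivalent if and only if M and N are isometric (there is a distance-preserving bijection M → N). -/

import Mathlib

open scoped ENNReal

class QuasiMetric (X : Type*) where
  qdist : X → X → ℝ≥0∞
  qdist_triangle : ∀ x y z : X, qdist x z ≤ qdist x y + qdist y z
  qdist_eq_zero_iff : ∀ x y : X, qdist x y = 0 ↔ x = y

open QuasiMetric

instance {X : Type*} [QuasiMetric X] (A : Set X) : QuasiMetric A where
  qdist a b := qdist a.1 b.1
  qdist_triangle a b c := qdist_triangle a.1 b.1 c.1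
  qdist_eq_zero_iff a b := (qdist_eq_zero_iff a.1 b.1).trans Subtype.coe_inj

/-- A map of quasimetric spaces is short (1-Lipschitz). -/
def IsShort {X Y : Type*} [QuasiMetric X] [QuasiMetric Y] (f : X → Y) : Prop :=
  ∀ x x' : X, qdist (f x) (f x') ≤ qdist x x'

/-- The distance `d(f,g) = sup_x d(f x, g x)` on maps. -/
noncomputable def mapDist {X Y : Type*} [QuasiMetric X] [QuasiMetric Y] (f g : X → Y) : ℝ≥0∞ :=
  ⨆ x : X, qdist (f x) (g x)

/-- Two short maps are `r`-homotopic if they are connected by a chain of short maps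
in which each consecutive pair is at distance `≤ r` in one direction or the other. -/
def MapHomotopic {X Y : Type*} [QuasiMetric X] [QuasiMetric Y] (r : ℝ) (f g : X → Y) : Prop :=
  Relation.ReflTransGen
    (fun u v : X → Y => IsShort u ∧ IsShort v ∧
      (mapDist u v ≤ ENNReal.ofReal r ∨ mapDist v u ≤ ENNReal.ofReal r)) f g

/-- `A ⊆ X` is an `r`-deformation retract of `X`. -/
def IsDefRetract {X : Type*} [QuasiMetric X] (r : ℝ) (A : Set X) : Prop :=
  ∃ ρ : X → A, IsShort ρ ∧ (∀ a : A, ρ (a : X) = a) ∧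
    MapHomotopic r (fun x => (ρ x : X)) id

/-- A quasimetric space is `r`-minimal if it has no proper `r`-deformation retract. -/
def RMinimal (r : ℝ) (X : Type*) [QuasiMetric X] : Prop :=
  ∀ A : Set X, IsDefRetract r A → A = Set.univ

/-- A distance-preserving bijection. -/
def IsIsometry {X Y : Type*} [QuasiMetric X] [QuasiMetric Y] (f : X → Y) : Prop :=
  Function.Bijective f ∧ ∀ x x' : X, qdist (f x) (f x') = qdist x x'

/-- Two quasimetric spaces are `r`-homotopy equivalent. -/
def RHomotopyEquivalent (r : ℝ) (X Y : Type*) [QuasiMetric X] [QuasiMetric Y] : Prop :=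
  ∃ f : X → Y, ∃ g : Y → X, IsShort f ∧ IsShort g ∧
    MapHomotopic r (g ∘ f) id ∧ MapHomotopic r (f ∘ g) id

/-
If `h` is a short self-map of a finite space `r`-homotopic to the identity, some iterate `h^[n]`
is idempotent and still `r`-homotopic to the identity, so its image is an `r`-deformation retract.
In an `r`-minimal space this image is everything, hence `h` is bijective; and a short bijection of a
finite space is an isometry, because its inverse is one of its iterates. Applied to `g ∘ f` for an
`r`-homotopy equivalence `f : M → N` with inverse `g` between `r`-minimal spaces, this shows that
`f` is a bijection with `d(x, x') ≤ d(g (f x), g (f x')) ≤ d(f x, f x') ≤ d(x, x')`.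
Conversely isometries are `r`-homotopy equivalences, and `r`-homotopy equivalence is an
equivalence relation.
-/

open Function

theorem exists_isIdempotentElem_pow {M : Type*} [Monoid M] [Finite M] (a : M) :
    ∃ n, 0 < n ∧ IsIdempotentElem (a ^ n) := by
  obtain ⟨i, j, hne, hij⟩ := Finite.exists_ne_map_eq_of_infinite (a ^ · : ℕ → M)
  wlog hlt : i < j generalizing i j
  · exact this j i hne.symm hij.symm (by omega)
  obtain ⟨p, rfl⟩ : ∃ p, j = i + p := ⟨j - i, by omega⟩
  have hper : ∀ k, a ^ (i + k * p) = a ^ i := by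
    intro k
    induction k with
    | zero => simp
    | succ k ih => rw [add_mul, one_mul, ← add_assoc, pow_add, ih, ← pow_add, ← hij]
  have hp : 0 < p := by omega
  refine ⟨(i + 1) * p, by positivity, ?_⟩
  obtain ⟨t, ht⟩ := Nat.exists_eq_add_of_le (show i ≤ (i + 1) * p by nlinarith)
  calc a ^ ((i + 1) * p) * a ^ ((i + 1) * p)
      = a ^ (i + (i + 1) * p) * a ^ t := by rw [← pow_add, ← pow_add, ht]; ring_nf
    _ = a ^ ((i + 1) * p) := by rw [hper, ← pow_add, ht]

section

variable {W X Y Z : Type*} [QuasiMetric W] [QuasiMetric X] [QuasiMetric Y] [QuasiMetric Z]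

theorem isShort_id : IsShort (id : X → X) := fun _ _ => le_rfl

theorem IsShort.comp {g : Y → Z} {f : X → Y} (hg : IsShort g) (hf : IsShort f) :
    IsShort (g ∘ f) := fun x x' => (hg _ _).trans (hf x x')

theorem IsShort.iterate {h : X → X} (hh : IsShort h) : ∀ n, IsShort h^[n]
  | 0 => isShort_id
  | n + 1 => (hh.iterate n).comp hh

theorem mapDist_comp_le {a : Y → Z} (ha : IsShort a) (b : W → X) (u v : X → Y) :
    mapDist (a ∘ u ∘ b) (a ∘ v ∘ b) ≤ mapDist u v :=
  iSup_le fun w => (ha _ _).trans (le_iSup (fun x => qdist (u x) (v x)) (b w))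

theorem MapHomotopic.refl (r : ℝ) (u : X → Y) : MapHomotopic r u u :=
  Relation.ReflTransGen.refl

theorem MapHomotopic.trans {r : ℝ} {u v w : X → Y} (h₁ : MapHomotopic r u v)
    (h₂ : MapHomotopic r v w) : MapHomotopic r u w :=
  Relation.ReflTransGen.trans h₁ h₂

theorem MapHomotopic.comp {r : ℝ} {u v : X → Y} (h : MapHomotopic r u v)
    {a : Y → Z} {b : W → X} (ha : IsShort a) (hb : IsShort b) :
    MapHomotopic r (a ∘ u ∘ b) (a ∘ v ∘ b) := by
  induction h with
  | refl => exact MapHomotopic.refl r _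
  | tail _ hstep ih =>
    obtain ⟨hu, hv, hdist⟩ := hstep
    refine ih.tail ⟨ha.comp (hu.comp hb), ha.comp (hv.comp hb), ?_⟩
    exact hdist.imp (mapDist_comp_le ha b _ _).trans (mapDist_comp_le ha b _ _).trans

theorem MapHomotopic.iterate {r : ℝ} {h : X → X} (hs : IsShort h)
    (hh : MapHomotopic r h id) : ∀ n, MapHomotopic r h^[n] id
  | 0 => MapHomotopic.refl r id
  | n + 1 => by
    rw [iterate_succ']
    exact ((hh.iterate hs n).comp hs isShort_id).trans hh

theorem IsShort.isIsometry_of_bijective [Finite X] {h : X → X} (hs : IsShort h)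
    (hb : Bijective h) : IsIsometry h := by
  set σ := Equiv.ofBijective h hb
  obtain ⟨k, hk⟩ : ∃ k, σ ^ (k + 1) = 1 :=
    ⟨orderOf σ - 1, by rw [Nat.sub_add_cancel (orderOf_pos σ)]; exact pow_orderOf_eq_one σ⟩
  have hinv : ∀ y, h^[k] (h y) = y := fun y => by
    have := congr($hk y)
    rwa [Equiv.Perm.coe_pow, iterate_succ_apply, Equiv.Perm.one_apply] at this
  refine ⟨hb, fun x x' => le_antisymm (hs x x') ?_⟩
  calc qdist x x' = qdist (h^[k] (h x)) (h^[k] (h x')) := by rw [hinv, hinv]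
    _ ≤ qdist (h x) (h x') := hs.iterate k _ _

theorem RMinimal.bijective_of_mapHomotopic_id [Finite X] {r : ℝ} (hmin : RMinimal r X)
    {h : X → X} (hs : IsShort h) (hh : MapHomotopic r h id) : Bijective h := by
  have : Finite (Function.End X) := inferInstanceAs (Finite (X → X))
  obtain ⟨n, hn, hidem⟩ := exists_isIdempotentElem_pow (show Function.End X from h)
  have hretract : IsDefRetract r (Set.range h^[n]) := by
    refine ⟨Set.rangeFactorization h^[n], fun x x' => hs.iterate n x x', ?_, hh.iterate hs n⟩
    rintro ⟨_, y, rfl⟩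
    exact Subtype.ext (congrFun hidem y)
  have hsurj : Surjective h^[n] := Set.range_eq_univ.mp (hmin _ hretract)
  obtain ⟨m, rfl⟩ : ∃ m, n = m + 1 := ⟨n - 1, by omega⟩
  rw [iterate_succ'] at hsurj
  exact Finite.surjective_iff_bijective.mp hsurj.of_comp

theorem RHomotopyEquivalent.symm {r : ℝ} (h : RHomotopyEquivalent r X Y) :
    RHomotopyEquivalent r Y X :=
  let ⟨f, g, hf, hg, hgf, hfg⟩ := h
  ⟨g, f, hg, hf, hfg, hgf⟩

theorem RHomotopyEquivalent.trans {r : ℝ} (h₁ : RHomotopyEquivalent r X Y)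
    (h₂ : RHomotopyEquivalent r Y Z) : RHomotopyEquivalent r X Z := by
  obtain ⟨f₁, g₁, hf₁, hg₁, hgf₁, hfg₁⟩ := h₁
  obtain ⟨f₂, g₂, hf₂, hg₂, hgf₂, hfg₂⟩ := h₂
  exact ⟨f₂ ∘ f₁, g₁ ∘ g₂, hf₂.comp hf₁, hg₁.comp hg₂,
    (hgf₂.comp hg₁ hf₁).trans hgf₁, (hfg₁.comp hf₂ hg₂).trans hfg₂⟩

theorem IsIsometry.rHomotopyEquivalent (r : ℝ) {f : X → Y} (hf : IsIsometry f) :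
    RHomotopyEquivalent r X Y := by
  obtain ⟨hb, hd⟩ := hf
  set e := Equiv.ofBijective f hb
  have he : IsShort e.symm := fun y y' => by
    rw [← hd, show f = e from rfl, e.apply_symm_apply, e.apply_symm_apply]
  refine ⟨f, e.symm, fun x x' => (hd x x').le, he, ?_, ?_⟩
  · rw [show e.symm ∘ f = id from funext e.symm_apply_apply]
    exact MapHomotopic.refl r id
  · rw [show f ∘ e.symm = id from funext e.apply_symm_apply]
    exact MapHomotopic.refl r id

theorem RMinimal.exists_isIsometry_of_rHomotopyEquivalent [Finite X] [Finite Y] {r : ℝ}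
    (hX : RMinimal r X) (hY : RMinimal r Y) (h : RHomotopyEquivalent r X Y) :
    ∃ f : X → Y, IsIsometry f := by
  obtain ⟨f, g, hf, hg, hgf, hfg⟩ := h
  have hgf_iso := (hg.comp hf).isIsometry_of_bijective
    (hX.bijective_of_mapHomotopic_id (hg.comp hf) hgf)
  have hfg_bij := hY.bijective_of_mapHomotopic_id (hf.comp hg) hfg
  refine ⟨f, ⟨hgf_iso.1.injective.of_comp, hfg_bij.surjective.of_comp⟩,
    fun x x' => le_antisymm (hf x x') ?_⟩
  calc qdist x x' = qdist (g (f x)) (g (f x')) := (hgf_iso.2 x x').symm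
    _ ≤ qdist (f x) (f x') := hg _ _

end

theorem stmt_7_general {X Y M N : Type*} [QuasiMetric X] [QuasiMetric Y] [QuasiMetric M] [QuasiMetric N]
    [Finite M] [Finite N] (r : ℝ)
    (hM : RMinimal r M ∧ RHomotopyEquivalent r M X)
    (hN : RMinimal r N ∧ RHomotopyEquivalent r N Y) :
    RHomotopyEquivalent r X Y ↔ ∃ f : M → N, IsIsometry f := by
  obtain ⟨hMmin, hMX⟩ := hM
  obtain ⟨hNmin, hNY⟩ := hN
  constructor
  · intro hXY
    exact hMmin.exists_isIsometry_of_rHomotopyEquivalent hNmin (hMX.trans (hXY.trans hNY.symm))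
  · rintro ⟨f, hf⟩
    exact (hMX.symm.trans (hf.rHomotopyEquivalent r)).trans hNY

theorem stmt_7 {X Y M N : Type*} [QuasiMetric X] [QuasiMetric Y] [QuasiMetric M] [QuasiMetric N]
    [Finite X] [Finite Y] [Finite M] [Finite N] (r : ℝ) (hr : 0 ≤ r)
    (hM : RMinimal r M ∧ RHomotopyEquivalent r M X)
    (hN : RMinimal r N ∧ RHomotopyEquivalent r N Y) :
    RHomotopyEquivalent r X Y ↔ ∃ f : M → N, IsIsometry f :=
  stmt_7_general r hM hN
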